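/- Let X ~ Beta(α, β) with α, β > 0 and let M₁ = E[X], M₂ = E[X·log(X/(1−X))], M₃ = E[log(X/(1−X))]. If X₁, X₂, … are i.i.d. copies of X and M̄₁, M̄₂, M̄₃ denote the corresponding sample means of X_i, X_i·log(X_i/(1−X_i)), log(X_i/(1−X_i)), then the estimators α̂_n = M̄₁/(M̄₂ − M̄₁M̄₃) and β̂_n = (1 − M̄₁)/(M̄₂ − M̄₁M̄₃) converge almost surely to α and β respectively. -/

import Mathlib

/-!
By the strong law of large numbers the sample means converge almost surely to
`M₁ = E[X]`, `M₂ = E[X logit X]` and `M₃ = E[logit X]`, so it suffices to show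
`M₁ = α / (α + β)` and `M₂ - M₁ M₃ = 1 / (α + β)`; both estimators are then continuous
functions of the three means at the limit point. Writing `k_{a,b}(x) = x^(a-1) (1-x)^(b-1)`,
one has `x k_{a,b} = k_{a+1,b}`, which gives `M₁` from `B(α+1,β) = α/(α+β) B(α,β)` and turns
`M₂` into an integral against `k_{α+1,β}`. Integrating the derivative of
`logit(x) x^a (1-x)^b`, whose boundary values vanish, over `(0,1)` yields
`(a+b) ∫ logit · k_{a+1,b} = B(a,b) + a ∫ logit · k_{a,b}`, which is the second identity.
-/
open MeasureTheory Real Filter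

noncomputable def betaB (a b : ℝ) : ℝ := Real.Gamma a * Real.Gamma b / Real.Gamma (a + b)

/-- digamma function ψ = Γ'/Γ -/
noncomputable def digamma (z : ℝ) : ℝ := deriv Real.Gamma z / Real.Gamma z

/-- Beta(a,b) probability density on (0,1). -/
noncomputable def betaPDF (a b x : ℝ) : ℝ := x ^ (a - 1) * (1 - x) ^ (b - 1) / betaB a b

/-- Expectation of `h(X)` for `X ~ Beta(a,b)`. -/
noncomputable def betaE (a b : ℝ) (h : ℝ → ℝ) : ℝ :=
  ∫ x in Set.Ioo (0:ℝ) 1, h x * betaPDF a b x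

/-- Beta(a,b) measure on ℝ. -/
noncomputable def betaMeasure (a b : ℝ) : Measure ℝ :=
  volume.withDensity (fun x => ENNReal.ofReal (Set.indicator (Set.Ioo (0:ℝ) 1) (betaPDF a b) x))

open Set Topology

noncomputable def betaKernel (a b x : ℝ) : ℝ := x ^ (a - 1) * (1 - x) ^ (b - 1)

noncomputable def logit (x : ℝ) : ℝ := Real.log (x / (1 - x))

section BetaKernel

variable {a b x : ℝ}

lemma betaPDF_eq_betaKernel_div : betaPDF a b x = betaKernel a b x / betaB a b := rfl

@[fun_prop]
lemma measurable_betaKernel (a b : ℝ) : Measurable (betaKernel a b) := by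
  unfold betaKernel; fun_prop

lemma betaKernel_nonneg (hx : x ∈ Icc 0 1) : 0 ≤ betaKernel a b x :=
  mul_nonneg (rpow_nonneg hx.1 _) (rpow_nonneg (sub_nonneg.2 hx.2) _)

lemma mul_betaKernel (hx : 0 < x) : x * betaKernel a b x = betaKernel (a + 1) b x := by
  rw [betaKernel, betaKernel, add_sub_cancel_right, ← mul_assoc, mul_comm x,
    ← rpow_add_one hx.ne', sub_add_cancel]

lemma ofReal_betaKernel (hx : x ∈ Icc 0 1) :
    ((betaKernel a b x : ℝ) : ℂ) = (x : ℂ) ^ ((a : ℂ) - 1) * (1 - (x : ℂ)) ^ ((b : ℂ) - 1) := by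
  rw [betaKernel, Complex.ofReal_mul, Complex.ofReal_cpow hx.1,
    Complex.ofReal_cpow (sub_nonneg.2 hx.2)]
  push_cast
  rfl

lemma betaIntegral_eq_ofReal_integral_betaKernel :
    Complex.betaIntegral a b = ((∫ x in (0 : ℝ)..1, betaKernel a b x : ℝ) : ℂ) := by
  rw [Complex.betaIntegral, ← intervalIntegral.integral_ofReal]
  refine intervalIntegral.integral_congr fun x hx => (ofReal_betaKernel ?_).symm
  rwa [uIcc_of_le zero_le_one] at hx

lemma integrableOn_betaKernel (ha : 0 < a) (hb : 0 < b) :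
    IntegrableOn (betaKernel a b) (Ioo 0 1) := by
  have h : IntegrableOn _ (Ioc (0 : ℝ) 1) :=
    (Complex.betaIntegral_convergent (u := a) (v := b) (by simpa) (by simpa)).1.re
  refine (h.mono_set Ioo_subset_Ioc_self).congr_fun (fun x hx => ?_) measurableSet_Ioo
  simp only [← ofReal_betaKernel (Ioo_subset_Icc_self hx), RCLike.re_to_complex, Complex.ofReal_re]

lemma betaB_eq_integral_betaKernel (ha : 0 < a) (hb : 0 < b) :
    betaB a b = ∫ x in Ioo 0 1, betaKernel a b x := by
  rw [← integral_Ioc_eq_integral_Ioo, ← intervalIntegral.integral_of_le zero_le_one,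
    ← Complex.ofReal_re (∫ x in (0 : ℝ)..1, betaKernel a b x),
    ← betaIntegral_eq_ofReal_integral_betaKernel]
  exact ProbabilityTheory.beta_eq_betaIntegralReal a b ha hb

lemma betaB_pos (ha : 0 < a) (hb : 0 < b) : 0 < betaB a b :=
  ProbabilityTheory.beta_pos ha hb

lemma betaB_add_one_left (ha : a ≠ 0) (hab : a + b ≠ 0) :
    betaB (a + 1) b = a / (a + b) * betaB a b := by
  rw [betaB, betaB, Real.Gamma_add_one ha, add_right_comm, Real.Gamma_add_one hab]
  field_simp

end BetaKernel

section Logit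

variable {a b x : ℝ}

@[fun_prop]
lemma measurable_logit : Measurable logit := by
  unfold logit; fun_prop

lemma logit_one_sub (x : ℝ) : logit (1 - x) = -logit x := by
  rw [logit, logit, sub_sub_cancel, ← inv_div, Real.log_inv]

lemma logit_eq_log_sub_log (hx : x ∈ Ioo 0 1) : logit x = Real.log x - Real.log (1 - x) :=
  Real.log_div hx.1.ne' (sub_pos.2 hx.2).ne'

lemma abs_log_mul_rpow_sub_one_le {c y : ℝ} (hc : 0 < c) (hy : y ∈ Ioc 0 1) :
    |Real.log y| * y ^ (c - 1) ≤ 2 / c * y ^ (c / 2 - 1) := by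
  have hsplit : y ^ (c - 1) = y ^ (c / 2) * y ^ (c / 2 - 1) := by
    rw [← rpow_add hy.1]; ring_nf
  have hlog : |Real.log y * y ^ (c / 2)| < 1 / (c / 2) :=
    Real.abs_log_mul_self_rpow_lt y (c / 2) hy.1 hy.2 (half_pos hc)
  rw [abs_mul, abs_of_pos (rpow_pos_of_pos hy.1 _)] at hlog
  rw [hsplit, ← mul_assoc, show 2 / c = 1 / (c / 2) by ring]
  exact mul_le_mul_of_nonneg_right hlog.le (rpow_nonneg hy.1.le _)

lemma abs_logit_mul_betaKernel_le (ha : 0 < a) (hb : 0 < b) (hx : x ∈ Ioo 0 1) :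
    |logit x| * betaKernel a b x
      ≤ 2 / a * betaKernel (a / 2) b x + 2 / b * betaKernel a (b / 2) x := by
  obtain ⟨hx0, hx1⟩ := hx
  have hy : 1 - x ∈ Ioc 0 1 := ⟨sub_pos.2 hx1, by linarith⟩
  have hA := abs_log_mul_rpow_sub_one_le ha ⟨hx0, hx1.le⟩
  have hB := abs_log_mul_rpow_sub_one_le hb hy
  calc |logit x| * betaKernel a b x
      ≤ (|Real.log x| + |Real.log (1 - x)|) * betaKernel a b x := by
        rw [logit_eq_log_sub_log ⟨hx0, hx1⟩]
        gcongr
        · exact betaKernel_nonneg ⟨hx0.le, hx1.le⟩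
        · exact abs_sub _ _
    _ = |Real.log x| * x ^ (a - 1) * (1 - x) ^ (b - 1)
        + x ^ (a - 1) * (|Real.log (1 - x)| * (1 - x) ^ (b - 1)) := by
        rw [betaKernel]; ring
    _ ≤ 2 / a * x ^ (a / 2 - 1) * (1 - x) ^ (b - 1)
        + x ^ (a - 1) * (2 / b * (1 - x) ^ (b / 2 - 1)) := by gcongr
    _ = 2 / a * betaKernel (a / 2) b x + 2 / b * betaKernel a (b / 2) x := by
        rw [betaKernel, betaKernel]; ring

lemma integrableOn_logit_mul_betaKernel (ha : 0 < a) (hb : 0 < b) :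
    IntegrableOn (fun x => logit x * betaKernel a b x) (Ioo 0 1) := by
  refine Integrable.mono' (((integrableOn_betaKernel (half_pos ha) hb).const_mul (2 / a)).add
      ((integrableOn_betaKernel ha (half_pos hb)).const_mul (2 / b)))
    (by fun_prop) ((ae_restrict_iff' measurableSet_Ioo).2 (ae_of_all _ fun x hx => ?_))
  rw [norm_mul, Real.norm_eq_abs, Real.norm_eq_abs,
    abs_of_nonneg (betaKernel_nonneg (Ioo_subset_Icc_self hx))]
  exact abs_logit_mul_betaKernel_le ha hb hx

end Logit

section Parts

variable {a b x : ℝ}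

lemma hasDerivAt_logit (hx : x ∈ Ioo 0 1) : HasDerivAt logit (x⁻¹ + (1 - x)⁻¹) x := by
  have hx0 : x ≠ 0 := hx.1.ne'
  have h1x : 1 - x ≠ 0 := (sub_pos.2 hx.2).ne'
  have hdiv : HasDerivAt (fun y => y / (1 - y)) ((1 * (1 - x) - x * -1) / (1 - x) ^ 2) x :=
    (hasDerivAt_id' x).div ((hasDerivAt_id' x).const_sub 1) h1x
  refine (hdiv.log (div_pos hx.1 (sub_pos.2 hx.2)).ne').congr_deriv ?_
  field_simp
  ring

lemma hasDerivAt_logit_mul_rpow_mul_rpow (hx : x ∈ Ioo 0 1) :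
    HasDerivAt (fun y => logit y * (y ^ a * (1 - y) ^ b))
      (betaKernel a b x + a * (logit x * betaKernel a b x)
        - (a + b) * (logit x * betaKernel (a + 1) b x)) x := by
  obtain ⟨hx0, hx1⟩ := hx
  have h1x : 0 < 1 - x := sub_pos.2 hx1
  have hpow : HasDerivAt (fun y => y ^ a * (1 - y) ^ b)
      (a * x ^ (a - 1) * (1 - x) ^ b + x ^ a * (b * (1 - x) ^ (b - 1) * -1)) x :=
    (Real.hasDerivAt_rpow_const (Or.inl hx0.ne')).mul
      ((Real.hasDerivAt_rpow_const (Or.inl h1x.ne')).comp x ((hasDerivAt_id x).const_sub 1))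
  refine ((hasDerivAt_logit ⟨hx0, hx1⟩).mul hpow).congr_deriv ?_
  have ea : x ^ a = x ^ (a - 1) * x := by rw [← rpow_add_one hx0.ne', sub_add_cancel]
  have eb : (1 - x) ^ b = (1 - x) ^ (b - 1) * (1 - x) := by
    rw [← rpow_add_one h1x.ne', sub_add_cancel]
  rw [← mul_betaKernel hx0, betaKernel, ea, eb]
  field_simp
  ring

lemma tendsto_logit_mul_rpow_mul_rpow_nhdsGT_zero (ha : 0 < a) (b : ℝ) :
    Tendsto (fun y => logit y * (y ^ a * (1 - y) ^ b)) (𝓝[>] 0) (𝓝 0) := by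
  have hsplit : ∀ᶠ y in 𝓝[>] 0, Real.log y * y ^ a * (1 - y) ^ b
      - Real.log (1 - y) * (y ^ a * (1 - y) ^ b) = logit y * (y ^ a * (1 - y) ^ b) := by
    filter_upwards [Ioo_mem_nhdsGT zero_lt_one] with y hy
    rw [logit_eq_log_sub_log hy]
    ring
  have hcont : ContinuousAt (fun y : ℝ => (1 - y) ^ b) 0 :=
    (continuousAt_const.sub continuousAt_id).rpow_const (Or.inl (by norm_num))
  have hlog : Tendsto (fun y => Real.log y * y ^ a * (1 - y) ^ b) (𝓝[>] 0)
      (𝓝 (0 * (1 - 0) ^ b)) :=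
    (tendsto_log_mul_rpow_nhdsGT_zero ha).mul (hcont.tendsto.mono_left nhdsWithin_le_nhds)
  have hlog_one_sub : ContinuousAt (fun y => Real.log (1 - y) * (y ^ a * (1 - y) ^ b)) 0 :=
    ((Real.continuousAt_log (by norm_num)).comp (continuousAt_const.sub continuousAt_id)).mul
      ((continuousAt_id.rpow_const (Or.inr ha.le)).mul hcont)
  simpa using (hlog.sub (hlog_one_sub.tendsto.mono_left nhdsWithin_le_nhds)).congr' hsplit

lemma tendsto_logit_mul_rpow_mul_rpow_nhdsLT_one (a : ℝ) (hb : 0 < b) :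
    Tendsto (fun y => logit y * (y ^ a * (1 - y) ^ b)) (𝓝[<] 1) (𝓝 0) := by
  have hswap : Tendsto (fun y : ℝ => 1 - y) (𝓝[<] 1) (𝓝[>] 0) :=
    tendsto_nhdsWithin_of_tendsto_nhds_of_eventually_within _
      (((continuous_sub_left (1 : ℝ)).tendsto' 1 0 (sub_self 1)).mono_left nhdsWithin_le_nhds)
      (eventually_nhdsWithin_of_forall fun _ hy => sub_pos.2 (mem_Iio.1 hy))
  have hreflect := ((tendsto_logit_mul_rpow_mul_rpow_nhdsGT_zero hb a).comp hswap).neg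
  rw [neg_zero] at hreflect
  refine hreflect.congr fun y => ?_
  simp only [Function.comp_apply, logit_one_sub, sub_sub_cancel]
  ring

lemma integral_logit_mul_betaKernel_add_one_left (ha : 0 < a) (hb : 0 < b) :
    (a + b) * ∫ x in Ioo 0 1, logit x * betaKernel (a + 1) b x
      = betaB a b + a * ∫ x in Ioo 0 1, logit x * betaKernel a b x := by
  have hint₁ := integrableOn_betaKernel ha hb
  have hint₂ := (integrableOn_logit_mul_betaKernel ha hb).const_mul a
  have hint₃ := (integrableOn_logit_mul_betaKernel (by linarith : 0 < a + 1) hb).const_mul (a + b)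
  have hFTC := intervalIntegral.integral_eq_sub_of_hasDerivAt_of_tendsto zero_lt_one
    (fun x hx => hasDerivAt_logit_mul_rpow_mul_rpow hx)
    ((intervalIntegrable_iff_integrableOn_Ioo_of_le zero_le_one).2 ((hint₁.add hint₂).sub hint₃))
    (tendsto_logit_mul_rpow_mul_rpow_nhdsGT_zero ha b)
    (tendsto_logit_mul_rpow_mul_rpow_nhdsLT_one a hb)
  rw [sub_zero, intervalIntegral.integral_of_le zero_le_one, integral_Ioc_eq_integral_Ioo,
    integral_sub (f := fun x => betaKernel a b x + a * (logit x * betaKernel a b x))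
      (hint₁.add hint₂) hint₃, integral_add hint₁ hint₂, integral_const_mul,
    integral_const_mul, ← betaB_eq_integral_betaKernel ha hb] at hFTC
  linarith

end Parts

section Moments

variable {a b : ℝ}

lemma betaE_eq_integral_mul_betaKernel_div (h : ℝ → ℝ) :
    betaE a b h = (∫ x in Ioo 0 1, h x * betaKernel a b x) / betaB a b := by
  rw [betaE, ← integral_div]
  simp only [betaPDF_eq_betaKernel_div, mul_div_assoc]

lemma betaE_id (ha : 0 < a) (hb : 0 < b) : betaE a b (fun x => x) = a / (a + b) := by
  rw [betaE_eq_integral_mul_betaKernel_div,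
    setIntegral_congr_fun measurableSet_Ioo fun x hx => mul_betaKernel hx.1,
    ← betaB_eq_integral_betaKernel (by linarith) hb,
    betaB_add_one_left ha.ne' (by linarith : 0 < a + b).ne', mul_div_assoc,
    div_self (betaB_pos ha hb).ne', mul_one]

lemma betaE_mul_logit_sub_betaE_mul_betaE (ha : 0 < a) (hb : 0 < b) :
    betaE a b (fun x => x * logit x) - betaE a b (fun x => x) * betaE a b logit
      = 1 / (a + b) := by
  have hparts := integral_logit_mul_betaKernel_add_one_left ha hb
  have hshift : ∫ x in Ioo 0 1, x * logit x * betaKernel a b x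
      = ∫ x in Ioo 0 1, logit x * betaKernel (a + 1) b x :=
    setIntegral_congr_fun measurableSet_Ioo fun x hx => by
      rw [← mul_betaKernel hx.1]; ring
  have hB := (betaB_pos ha hb).ne'
  have hab : a + b ≠ 0 := (by linarith : 0 < a + b).ne'
  rw [betaE_id ha hb, betaE_eq_integral_mul_betaKernel_div, betaE_eq_integral_mul_betaKernel_div,
    hshift]
  field_simp
  linear_combination hparts

end Moments

section BetaMeasure

variable {a b : ℝ}

lemma betaPDF_nonneg (ha : 0 < a) (hb : 0 < b) {x : ℝ} (hx : x ∈ Icc 0 1) : 0 ≤ betaPDF a b x :=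
  div_nonneg (betaKernel_nonneg hx) (betaB_pos ha hb).le

@[fun_prop]
lemma measurable_betaPDF (a b : ℝ) : Measurable (betaPDF a b) :=
  (measurable_betaKernel a b).div_const _

lemma betaMeasure_eq_withDensity (a b : ℝ) :
    betaMeasure a b
      = (volume.restrict (Ioo 0 1)).withDensity fun x => ENNReal.ofReal (betaPDF a b x) := by
  rw [betaMeasure, ← withDensity_indicator measurableSet_Ioo]
  congr 1
  funext x
  by_cases hx : x ∈ Ioo (0 : ℝ) 1 <;> simp [hx]

lemma toReal_ofReal_betaPDF_ae (ha : 0 < a) (hb : 0 < b) :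
    ∀ᵐ x ∂volume.restrict (Ioo 0 1), (ENNReal.ofReal (betaPDF a b x)).toReal = betaPDF a b x :=
  ae_restrict_of_forall_mem measurableSet_Ioo fun _ hx =>
    ENNReal.toReal_ofReal (betaPDF_nonneg ha hb (Ioo_subset_Icc_self hx))

lemma integrable_betaMeasure_iff (ha : 0 < a) (hb : 0 < b) {h : ℝ → ℝ} :
    Integrable h (betaMeasure a b) ↔ IntegrableOn (fun x => h x * betaKernel a b x) (Ioo 0 1) := by
  rw [betaMeasure_eq_withDensity, integrable_withDensity_iff (by fun_prop)
    (ae_of_all _ fun _ => ENNReal.ofReal_lt_top), IntegrableOn,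
    integrable_congr ((toReal_ofReal_betaPDF_ae ha hb).mono fun x hx => by rw [hx])]
  simp only [betaPDF_eq_betaKernel_div, div_eq_mul_inv, ← mul_assoc]
  exact integrable_mul_const_iff (isUnit_iff_ne_zero.2 (inv_ne_zero (betaB_pos ha hb).ne')) _

lemma integral_betaMeasure (ha : 0 < a) (hb : 0 < b) (h : ℝ → ℝ) :
    ∫ x, h x ∂betaMeasure a b = betaE a b h := by
  rw [betaMeasure_eq_withDensity, integral_withDensity_eq_integral_toReal_smul (by fun_prop)
    (ae_of_all _ fun _ => ENNReal.ofReal_lt_top), betaE]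
  refine integral_congr_ae ((toReal_ofReal_betaPDF_ae ha hb).mono fun x hx => ?_)
  dsimp only
  rw [hx, smul_eq_mul, mul_comm]

lemma integrable_id_betaMeasure (ha : 0 < a) (hb : 0 < b) :
    Integrable (fun x => x) (betaMeasure a b) :=
  (integrable_betaMeasure_iff ha hb).2 <|
    (integrableOn_betaKernel (a := a + 1) (by linarith) hb).congr_fun
      (fun x hx => (mul_betaKernel hx.1).symm) measurableSet_Ioo

lemma integrable_logit_betaMeasure (ha : 0 < a) (hb : 0 < b) :
    Integrable logit (betaMeasure a b) :=
  (integrable_betaMeasure_iff ha hb).2 (integrableOn_logit_mul_betaKernel ha hb)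

lemma integrable_mul_logit_betaMeasure (ha : 0 < a) (hb : 0 < b) :
    Integrable (fun x => x * logit x) (betaMeasure a b) :=
  (integrable_betaMeasure_iff ha hb).2 <|
    (integrableOn_logit_mul_betaKernel (a := a + 1) (by linarith) hb).congr_fun
      (fun x hx => by dsimp only; rw [← mul_betaKernel hx.1]; ring) measurableSet_Ioo

end BetaMeasure

open ProbabilityTheory in
lemma strong_law_ae_real_comp {Ω E : Type*} [MeasurableSpace Ω] [MeasurableSpace E]
    {P : Measure Ω} {μ : Measure E} (X : ℕ → Ω → E) (hX : ∀ i, Measurable (X i))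
    (hdist : ∀ i, P.map (X i) = μ) (hindep : Pairwise (Function.onFun (IndepFun · · P) X))
    {h : E → ℝ} (hh : Measurable h) (hint : Integrable h μ) :
    ∀ᵐ ω ∂P, Tendsto (fun n : ℕ => (∑ i ∈ Finset.range n, h (X i ω)) / n) atTop
      (𝓝 (∫ x, h x ∂μ)) := by
  have hident : ∀ i, IdentDistrib (X i) (X 0) P P :=
    fun i => ⟨(hX i).aemeasurable, (hX 0).aemeasurable, by rw [hdist i, hdist 0]⟩
  have hmean : ∫ ω, h (X 0 ω) ∂P = ∫ x, h x ∂μ := by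
    rw [← hdist 0, integral_map (hX 0).aemeasurable hh.aestronglyMeasurable]
  rw [← hmean]
  refine strong_law_ae_real (fun i ω => h (X i ω)) ?_ (fun i j hij => (hindep hij).comp hh hh)
    fun i => (hident i).comp hh
  rw [← hdist 0] at hint
  exact (integrable_map_measure hh.aestronglyMeasurable (hX 0).aemeasurable).1 hint

open ProbabilityTheory in
theorem tamae_estimators_strong_consistency_general (α β : ℝ) (hα : 0 < α) (hβ : 0 < β)
    {Ω : Type*} [MeasureSpace Ω]
    (X : ℕ → Ω → ℝ) (hmeas : ∀ i, Measurable (X i))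
    (hdist : ∀ i, Measure.map (X i) ℙ = _root_.betaMeasure α β)
    (hindep : iIndepFun X ℙ) :
    ∀ᵐ ω ∂ℙ,
      Tendsto (fun n : ℕ =>
          ((∑ i ∈ Finset.range n, X i ω) / n) /
            ((∑ i ∈ Finset.range n, X i ω * Real.log (X i ω / (1 - X i ω))) / n
              - ((∑ i ∈ Finset.range n, X i ω) / n)
                * ((∑ i ∈ Finset.range n, Real.log (X i ω / (1 - X i ω))) / n)))
        atTop (nhds α) ∧
      Tendsto (fun n : ℕ =>
          (1 - (∑ i ∈ Finset.range n, X i ω) / n) /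
            ((∑ i ∈ Finset.range n, X i ω * Real.log (X i ω / (1 - X i ω))) / n
              - ((∑ i ∈ Finset.range n, X i ω) / n)
                * ((∑ i ∈ Finset.range n, Real.log (X i ω / (1 - X i ω))) / n)))
        atTop (nhds β) := by
  have slln {h : ℝ → ℝ} (hh : Measurable h) (hint : Integrable h (_root_.betaMeasure α β)) :=
    strong_law_ae_real_comp X hmeas hdist (fun i j hij => hindep.indepFun hij) hh hint
  filter_upwards [slln (h := fun x => x) measurable_id (integrable_id_betaMeasure hα hβ),
    slln (by fun_prop) (integrable_mul_logit_betaMeasure hα hβ),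
    slln measurable_logit (integrable_logit_betaMeasure hα hβ)] with ω hM₁ hM₂ hM₃
  rw [integral_betaMeasure hα hβ] at hM₁ hM₂ hM₃
  have hden := hM₂.sub (hM₁.mul hM₃)
  rw [betaE_mul_logit_sub_betaE_mul_betaE hα hβ] at hden
  rw [betaE_id hα hβ] at hM₁
  have hab : α + β ≠ 0 := (by linarith : 0 < α + β).ne'
  constructor
  · have hlim := hM₁.div hden (one_div_ne_zero hab)
    rwa [show α / (α + β) / (1 / (α + β)) = α by field_simp] at hlim
  · have hlim := ((tendsto_const_nhds (x := (1 : ℝ))).sub hM₁).div hden (one_div_ne_zero hab)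
    rwa [show (1 - α / (α + β)) / (1 / (α + β)) = β by field_simp; ring] at hlim

open ProbabilityTheory in
theorem tamae_estimators_strong_consistency (α β : ℝ) (hα : 0 < α) (hβ : 0 < β)
    {Ω : Type*} [MeasureSpace Ω] [IsProbabilityMeasure (ℙ : Measure Ω)]
    (X : ℕ → Ω → ℝ) (hmeas : ∀ i, Measurable (X i))
    (hdist : ∀ i, Measure.map (X i) ℙ = _root_.betaMeasure α β)
    (hindep : iIndepFun X ℙ) :
    ∀ᵐ ω ∂ℙ,
      Tendsto (fun n : ℕ =>
          ((∑ i ∈ Finset.range n, X i ω) / n) /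
            ((∑ i ∈ Finset.range n, X i ω * Real.log (X i ω / (1 - X i ω))) / n
              - ((∑ i ∈ Finset.range n, X i ω) / n)
                * ((∑ i ∈ Finset.range n, Real.log (X i ω / (1 - X i ω))) / n)))
        atTop (nhds α) ∧
      Tendsto (fun n : ℕ =>
          (1 - (∑ i ∈ Finset.range n, X i ω) / n) /
            ((∑ i ∈ Finset.range n, X i ω * Real.log (X i ω / (1 - X i ω))) / n
              - ((∑ i ∈ Finset.range n, X i ω) / n)
                * ((∑ i ∈ Finset.range n, Real.log (X i ω / (1 - X i ω))) / n)))
        atTop (nhds β) :=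
  tamae_estimators_strong_consistency_general α β hα hβ X hmeas hdist hindep
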